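/- For all real s ≥ 0, e^s + e^{-s} - 2 ≤ s^2 · (1 + (s·e^s)/6). -/

import Mathlib

/-! Taylor's theorem with Lagrange remainder at order two gives
`exp s = 1 + s + s²/2 + exp ξ · s³/6` with `0 < ξ < s`, so the cubic term is at most `s³ exp s / 6`,
while for `-s` the remainder `exp ξ' · (-s)³/6` is nonpositive. Adding the two bounds, the linear
terms cancel. -/

open Finset Set Nat

namespace Real

theorem taylorWithinEval_exp_uIcc_zero (n : ℕ) {x : ℝ} (hx : x ≠ 0) :
    taylorWithinEval exp n (uIcc 0 x) 0 x = ∑ k ∈ range (n + 1), x ^ k / k ! := by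
  rw [taylor_within_apply]
  refine sum_congr rfl fun k _ => ?_
  rw [iteratedDerivWithin_eq_iteratedDeriv (uniqueDiffOn_uIcc hx.symm) contDiff_exp.contDiffAt
    left_mem_uIcc, iteratedDeriv_eq_iterate, iter_deriv_exp, exp_zero, smul_eq_mul, sub_zero]
  field_simp

theorem exists_exp_eq_sum_add_exp_mul_pow_div (n : ℕ) {x : ℝ} (hx : x ≠ 0) :
    ∃ ξ ∈ uIoo 0 x, exp x = ∑ k ∈ range (n + 1), x ^ k / k ! + exp ξ * x ^ (n + 1) / (n + 1)! := by
  obtain ⟨ξ, hξ, h⟩ :=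
    taylor_mean_remainder_lagrange_iteratedDeriv hx.symm contDiff_exp.contDiffOn
  rw [taylorWithinEval_exp_uIcc_zero n hx, iteratedDeriv_eq_iterate, iter_deriv_exp,
    sub_zero] at h
  exact ⟨ξ, hξ, by linarith⟩

theorem exp_le_sum_add_exp_mul_pow_div (n : ℕ) {x : ℝ} (hx : 0 ≤ x) :
    exp x ≤ ∑ k ∈ range (n + 1), x ^ k / k ! + exp x * x ^ (n + 1) / (n + 1)! := by
  rcases hx.eq_or_lt with rfl | hx
  · simp [sum_range_succ']
  obtain ⟨ξ, hξ, h⟩ := exists_exp_eq_sum_add_exp_mul_pow_div n hx.ne'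
  rw [uIoo_of_le hx.le] at hξ
  calc exp x = ∑ k ∈ range (n + 1), x ^ k / k ! + exp ξ * x ^ (n + 1) / (n + 1)! := h
    _ ≤ ∑ k ∈ range (n + 1), x ^ k / k ! + exp x * x ^ (n + 1) / (n + 1)! := by
      gcongr
      exact hξ.2.le

theorem exp_le_sum_of_nonpos {n : ℕ} (hn : Even n) {x : ℝ} (hx : x ≤ 0) :
    exp x ≤ ∑ k ∈ range (n + 1), x ^ k / k ! := by
  rcases hx.eq_or_lt with rfl | hx
  · simp [sum_range_succ']
  obtain ⟨ξ, -, h⟩ := exists_exp_eq_sum_add_exp_mul_pow_div n hx.ne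
  have hrem : exp ξ * x ^ (n + 1) / (n + 1)! ≤ 0 :=
    div_nonpos_of_nonpos_of_nonneg
      (mul_nonpos_of_nonneg_of_nonpos (exp_pos ξ).le (hn.add_one.pow_nonpos hx.le)) (by positivity)
  linarith

end Real

theorem exp_add_exp_neg_sub_two_le_davies (s : ℝ) (hs : 0 ≤ s) :
    Real.exp s + Real.exp (-s) - 2 ≤ s ^ 2 * (1 + s * Real.exp s / 6) := by
  have hpos := Real.exp_le_sum_add_exp_mul_pow_div 2 hs
  have hneg := Real.exp_le_sum_of_nonpos even_two (neg_nonpos.2 hs)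
  norm_num [sum_range_succ, factorial] at hpos hneg
  linarith
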